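/- Fix n ≥ 1. For a permutation π of {1,…,n} avoiding the pattern 132, define σ as follows: σ(i) = π(i) for every position i at which π has a left-to-right minimum, and the remaining values of π are placed on the remaining positions in decreasing order (larger values at smaller positions). Then σ avoids the pattern 123, and the map π ↦ σ is a bijection from the set of 132-avoiding permutations of {1,…,n} onto the set of 123-avoiding permutations of {1,…,n}. -/

import Mathlib

/-- `π` contains the pattern `τ` if there is a strictly increasing sequence of indices
along which the values of `π` are in the same relative order as the values of `τ`. -/
def Contains {n m : ℕ} (π : Equiv.Perm (Fin n)) (τ : Equiv.Perm (Fin m)) : Prop :=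
  ∃ f : Fin m → Fin n, StrictMono f ∧ ∀ s t : Fin m, π (f s) < π (f t) ↔ τ s < τ t

/-- `π` has a left-to-right minimum at position `i` if `π i < π j` for every `j < i`. -/
def LRMin (n : ℕ) (π : Equiv.Perm (Fin n)) (i : Fin n) : Prop :=
  ∀ j : Fin n, j < i → π i < π j

namespace SimionSchmidtAux

variable {n : ℕ}

lemma not_lrmin_iff (π : Equiv.Perm (Fin n)) (i : Fin n) :
    ¬ LRMin n π i ↔ ∃ j, j < i ∧ π j < π i := by
  unfold LRMin
  push_neg
  constructor
  · rintro ⟨j, hj, hle⟩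
    exact ⟨j, hj, lt_of_le_of_ne hle (π.injective.ne hj.ne)⟩
  · rintro ⟨j, hj, hlt⟩
    exact ⟨j, hj, hlt.le⟩

/-- `τ` has the same left-to-right minima (positions and values) as `π`. -/
def sameMin (π τ : Equiv.Perm (Fin n)) : Prop :=
  (∀ i, LRMin n π i ↔ LRMin n τ i) ∧ ∀ i, LRMin n π i → τ i = π i

lemma sameMin_refl (π : Equiv.Perm (Fin n)) : sameMin π π :=
  ⟨fun _ => Iff.rfl, fun _ _ => rfl⟩

lemma sameMin_symm {π τ : Equiv.Perm (Fin n)} (h : sameMin π τ) : sameMin τ π :=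
  ⟨fun i => (h.1 i).symm, fun i hi => (h.2 i ((h.1 i).mpr hi)).symm⟩

lemma sameMin_trans {π τ ρ : Equiv.Perm (Fin n)} (h : sameMin π τ) (g : sameMin τ ρ) :
    sameMin π ρ :=
  ⟨fun i => (h.1 i).trans (g.1 i), fun i hi => (g.2 i ((h.1 i).mp hi)).trans (h.2 i hi)⟩

lemma exists_argmin (π : Equiv.Perm (Fin n)) {i : Fin n} (h : ¬ LRMin n π i) :
    ∃ l, l < i ∧ π l < π i ∧ ∀ j, j < i → π l ≤ π j := by
  obtain ⟨j0, hj0, hj0v⟩ := (not_lrmin_iff π i).mp h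
  have hne : (Finset.univ.filter (fun x : Fin n => x < i)).Nonempty :=
    ⟨j0, by simp [hj0]⟩
  obtain ⟨l, hl, hmin⟩ := Finset.exists_min_image _ π hne
  have hli : l < i := (Finset.mem_filter.mp hl).2
  refine ⟨l, hli, ?_, fun j hj => hmin j (by simp [hj])⟩
  exact lt_of_le_of_lt (hmin j0 (by simp [hj0])) hj0v

lemma sameMin_mul_swap (τ : Equiv.Perm (Fin n)) {i j : Fin n} (hij : i < j)
    (hi : ¬ LRMin n τ i) (hj : ¬ LRMin n τ j)
    (hw : ∃ l, l < i ∧ τ l < τ j) :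
    sameMin τ (τ * Equiv.swap i j) := by
  obtain ⟨l, hli, hlv⟩ := hw
  set τ' := τ * Equiv.swap i j with hτ'
  have e_i : τ' i = τ j := by
    rw [hτ', Equiv.Perm.mul_apply, Equiv.swap_apply_left]
  have e_j : τ' j = τ i := by
    rw [hτ', Equiv.Perm.mul_apply, Equiv.swap_apply_right]
  have e_other : ∀ m, m ≠ i → m ≠ j → τ' m = τ m := fun m h1 h2 => by
    rw [hτ', Equiv.Perm.mul_apply, Equiv.swap_apply_of_ne_of_ne h1 h2]
  obtain ⟨li, hlii, hliv⟩ := (not_lrmin_iff τ i).mp hi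
  have key : ∀ p, LRMin n τ p ↔ LRMin n τ' p := by
    intro p
    by_cases hpi : p = i
    · subst hpi
      refine iff_of_false hi ?_
      rw [not_lrmin_iff]
      refine ⟨l, hli, ?_⟩
      rw [e_other l (ne_of_lt hli) (ne_of_lt (hli.trans hij)), e_i]
      exact hlv
    by_cases hpj : p = j
    · subst hpj
      refine iff_of_false hj ?_
      rw [not_lrmin_iff]
      refine ⟨li, hlii.trans hij, ?_⟩
      rw [e_other li (ne_of_lt hlii) (ne_of_lt (hlii.trans hij)), e_j]
      exact hliv
    have ep : τ' p = τ p := e_other p hpi hpj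
    rcases (Ne.lt_or_gt hpi) with hplt | hpgt
    · -- p < i
      constructor
      · intro H m hm
        have hmi : m ≠ i := ne_of_lt (hm.trans hplt)
        have hmj : m ≠ j := ne_of_lt ((hm.trans hplt).trans hij)
        rw [ep, e_other m hmi hmj]
        exact H m hm
      · intro H m hm
        have hmi : m ≠ i := ne_of_lt (hm.trans hplt)
        have hmj : m ≠ j := ne_of_lt ((hm.trans hplt).trans hij)
        have := H m hm
        rwa [ep, e_other m hmi hmj] at this
    · rcases (Ne.lt_or_gt hpj) with hpltj | hpgtj
      · -- i < p < j
        constructor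
        · intro H m hm
          rw [ep]
          by_cases hmi : m = i
          · subst hmi
            rw [e_i]
            exact (H l (hli.trans hpgt)).trans hlv
          · have hmj : m ≠ j := ne_of_lt (hm.trans hpltj)
            rw [e_other m hmi hmj]
            exact H m hm
        · intro H
          by_contra hA
          obtain ⟨m, hm, hmv⟩ := (not_lrmin_iff τ p).mp hA
          have : ¬ LRMin n τ' p := by
            rw [not_lrmin_iff]
            by_cases hmi : m = i
            · subst hmi
              refine ⟨li, hlii.trans hpgt, ?_⟩
              rw [e_other li (ne_of_lt hlii) (ne_of_lt (hlii.trans hij)), ep]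
              exact hliv.trans hmv
            · refine ⟨m, hm, ?_⟩
              rw [e_other m hmi (ne_of_lt (hm.trans hpltj)), ep]
              exact hmv
          exact this H
      · -- j < p
        constructor
        · intro H m hm
          rw [ep]
          by_cases hmi : m = i
          · subst hmi
            rw [e_i]
            exact H j hpgtj
          by_cases hmj : m = j
          · subst hmj
            rw [e_j]
            exact H i (hij.trans hpgtj)
          · rw [e_other m hmi hmj]
            exact H m hm
        · intro H m hm
          by_cases hmi : m = i
          · subst hmi
            have := H j hpgtj
            rwa [ep, e_j] at this
          by_cases hmj : m = j
          · subst hmj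
            have := H i (hij.trans hpgtj)
            rwa [ep, e_i] at this
          · have := H m hm
            rwa [ep, e_other m hmi hmj] at this
  refine ⟨key, fun p hp => ?_⟩
  exact e_other p (fun h => hi (h ▸ hp)) (fun h => hj (h ▸ hp))

lemma contains132_iff (π : Equiv.Perm (Fin n)) :
    Contains π (Equiv.swap (1 : Fin 3) 2) ↔
      ∃ p q r : Fin n, p < q ∧ q < r ∧ π p < π r ∧ π r < π q := by
  constructor
  · rintro ⟨f, hf, h⟩
    exact ⟨f 0, f 1, f 2, hf (by decide), hf (by decide),
      (h 0 2).mpr (by decide), (h 2 1).mpr (by decide)⟩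
  · rintro ⟨p, q, r, hpq, hqr, h1, h2⟩
    refine ⟨![p, q, r], ?_, ?_⟩
    · intro s t hst
      fin_cases s <;> fin_cases t <;>
        first
          | exact absurd hst (by decide)
          | simpa using hpq
          | simpa using hqr
          | simpa using hpq.trans hqr
    · intro s t
      fin_cases s <;> fin_cases t <;>
        simp only [Matrix.cons_val_zero, Matrix.cons_val_one, Matrix.head_cons,
          Matrix.cons_val_two, Matrix.tail_cons, Fin.mk_zero, Fin.mk_one] <;>
        first
          | exact iff_of_false (lt_irrefl _) (by decide)
          | exact iff_of_true (h1.trans h2) (by decide)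
          | exact iff_of_true h1 (by decide)
          | exact iff_of_true h2 (by decide)
          | exact iff_of_false (asymm (h1.trans h2)) (by decide)
          | exact iff_of_false (asymm h1) (by decide)
          | exact iff_of_false (asymm h2) (by decide)

lemma contains123_iff (π : Equiv.Perm (Fin n)) :
    Contains π (1 : Equiv.Perm (Fin 3)) ↔
      ∃ p q r : Fin n, p < q ∧ q < r ∧ π p < π q ∧ π q < π r := by
  constructor
  · rintro ⟨f, hf, h⟩
    exact ⟨f 0, f 1, f 2, hf (by decide), hf (by decide),
      (h 0 1).mpr (by decide), (h 1 2).mpr (by decide)⟩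
  · rintro ⟨p, q, r, hpq, hqr, h1, h2⟩
    refine ⟨![p, q, r], ?_, ?_⟩
    · intro s t hst
      fin_cases s <;> fin_cases t <;>
        first
          | exact absurd hst (by decide)
          | simpa using hpq
          | simpa using hqr
          | simpa using hpq.trans hqr
    · intro s t
      fin_cases s <;> fin_cases t <;>
        simp only [Matrix.cons_val_zero, Matrix.cons_val_one, Matrix.head_cons,
          Matrix.cons_val_two, Matrix.tail_cons, Fin.mk_zero, Fin.mk_one] <;>
        first
          | exact iff_of_false (lt_irrefl _) (by decide)
          | exact iff_of_true (h1.trans h2) (by decide)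
          | exact iff_of_true h1 (by decide)
          | exact iff_of_true h2 (by decide)
          | exact iff_of_false (asymm (h1.trans h2)) (by decide)
          | exact iff_of_false (asymm h1) (by decide)
          | exact iff_of_false (asymm h2) (by decide)

lemma exists_dec (π : Equiv.Perm (Fin n)) :
    ∃ σ, sameMin π σ ∧ ∀ i j, ¬ LRMin n σ i → ¬ LRMin n σ j → i < j → σ j < σ i := by
  obtain ⟨σ, hσ, hmax⟩ := Set.Finite.exists_maximalFor
    (fun τ : Equiv.Perm (Fin n) => toLex (⇑τ)) {τ | sameMin π τ} (Set.toFinite _)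
    ⟨π, sameMin_refl π⟩
  refine ⟨σ, hσ, fun i j hi hj hij => ?_⟩
  by_contra hcon
  have hlt : σ i < σ j := lt_of_le_of_ne (not_lt.mp hcon) (σ.injective.ne hij.ne)
  obtain ⟨l, hli, hlv⟩ := (not_lrmin_iff σ i).mp hi
  have hsm : sameMin σ (σ * Equiv.swap i j) :=
    sameMin_mul_swap σ hij hi hj ⟨l, hli, hlv.trans hlt⟩
  have hmem : (σ * Equiv.swap i j) ∈ {τ | sameMin π τ} := sameMin_trans hσ hsm
  have hlex : toLex (⇑σ) < toLex (⇑(σ * Equiv.swap i j)) := by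
    have : Pi.Lex (· < ·) (@fun _ => (· < ·)) (⇑σ) (⇑(σ * Equiv.swap i j)) := by
      refine ⟨i, fun m hm => ?_, ?_⟩
      · rw [Equiv.Perm.mul_apply,
          Equiv.swap_apply_of_ne_of_ne (ne_of_lt hm) (ne_of_lt (hm.trans hij))]
      · rw [Equiv.Perm.mul_apply, Equiv.swap_apply_left]
        exact hlt
    exact this
  have heq := le_antisymm hlex.le (hmax hmem hlex.le)
  have heq2 : σ = σ * Equiv.swap i j :=
    Equiv.coe_fn_injective (toLex.injective heq)
  have : σ i = σ j := by
    conv_lhs => rw [heq2]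
    rw [Equiv.Perm.mul_apply, Equiv.swap_apply_left]
  exact absurd (σ.injective this) hij.ne

lemma exists_avoid132 (σ : Equiv.Perm (Fin n)) :
    ∃ π, sameMin σ π ∧ ¬ Contains π (Equiv.swap (1 : Fin 3) 2) := by
  obtain ⟨π, hπ, hmin⟩ := Set.Finite.exists_minimalFor
    (fun τ : Equiv.Perm (Fin n) => toLex (⇑τ)) {τ | sameMin σ τ} (Set.toFinite _)
    ⟨σ, sameMin_refl σ⟩
  refine ⟨π, hπ, fun hcon => ?_⟩
  rw [contains132_iff] at hcon
  obtain ⟨p, q, r, hpq, hqr, h1, h2⟩ := hcon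
  have hq : ¬ LRMin n π q := (not_lrmin_iff π q).mpr ⟨p, hpq, h1.trans h2⟩
  have hr : ¬ LRMin n π r := (not_lrmin_iff π r).mpr ⟨p, hpq.trans hqr, h1⟩
  have hsm : sameMin π (π * Equiv.swap q r) :=
    sameMin_mul_swap π hqr hq hr ⟨p, hpq, h1⟩
  have hmem : (π * Equiv.swap q r) ∈ {τ | sameMin σ τ} := sameMin_trans hπ hsm
  have hlex : toLex (⇑(π * Equiv.swap q r)) < toLex (⇑π) := by
    have : Pi.Lex (· < ·) (@fun _ => (· < ·)) (⇑(π * Equiv.swap q r)) (⇑π) := by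
      refine ⟨q, fun m hm => ?_, ?_⟩
      · rw [Equiv.Perm.mul_apply,
          Equiv.swap_apply_of_ne_of_ne (ne_of_lt hm) (ne_of_lt (hm.trans hqr))]
      · rw [Equiv.Perm.mul_apply, Equiv.swap_apply_left]
        exact h2
    exact this
  have heq := le_antisymm (hmin hmem hlex.le) hlex.le
  have heq2 : π = π * Equiv.swap q r :=
    Equiv.coe_fn_injective (toLex.injective heq)
  have : π q = π r := by
    conv_lhs => rw [heq2]
    rw [Equiv.Perm.mul_apply, Equiv.swap_apply_left]
  exact absurd (π.injective this) hqr.ne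

lemma avoids123 (σ : Equiv.Perm (Fin n))
    (hdec : ∀ i j, ¬ LRMin n σ i → ¬ LRMin n σ j → i < j → σ j < σ i) :
    ¬ Contains σ (1 : Equiv.Perm (Fin 3)) := by
  rw [contains123_iff]
  rintro ⟨p, q, r, hpq, hqr, h1, h2⟩
  by_cases hp : LRMin n σ p
  · by_cases hq : LRMin n σ q
    · exact absurd (hq p hpq) (asymm h1)
    · by_cases hr : LRMin n σ r
      · exact absurd (hr q hqr) (asymm h2)
      · exact absurd (hdec q r hq hr hqr) (asymm h2)
  · by_cases hq : LRMin n σ q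
    · by_cases hr : LRMin n σ r
      · exact absurd (hr q hqr) (asymm h2)
      · exact absurd (hdec p r hp hr (hpq.trans hqr)) (asymm (h1.trans h2))
    · exact absurd (hdec p q hp hq hpq) (asymm h1)

lemma dec_of_avoids123 (σ : Equiv.Perm (Fin n)) (h : ¬ Contains σ (1 : Equiv.Perm (Fin 3))) :
    ∀ i j, ¬ LRMin n σ i → ¬ LRMin n σ j → i < j → σ j < σ i := by
  intro i j hi hj hij
  by_contra hcon
  have hlt : σ i < σ j := lt_of_le_of_ne (not_lt.mp hcon) (σ.injective.ne hij.ne)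
  obtain ⟨l, hli, hlv⟩ := (not_lrmin_iff σ i).mp hi
  exact h ((contains123_iff σ).mpr ⟨l, i, j, hli, hij, hlv, hlt⟩)

lemma exists_least_diff {τ τ' : Equiv.Perm (Fin n)} (h : τ ≠ τ') :
    ∃ q, τ q ≠ τ' q ∧ ∀ m, m < q → τ m = τ' m := by
  have hne : (Finset.univ.filter (fun x : Fin n => τ x ≠ τ' x)).Nonempty := by
    obtain ⟨x, hx⟩ := not_forall.mp (fun hall => h (Equiv.ext hall))
    exact ⟨x, by simp [hx]⟩
  refine ⟨(Finset.univ.filter (fun x : Fin n => τ x ≠ τ' x)).min' hne, ?_, ?_⟩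
  · have := Finset.min'_mem _ hne
    exact (Finset.mem_filter.mp this).2
  · intro m hm
    by_contra hmem
    exact absurd (Finset.min'_le _ m (by simp [hmem])) (not_le.mpr hm)

lemma dec_key (a b : Equiv.Perm (Fin n)) (hs : sameMin a b)
    (hdb : ∀ i j, ¬ LRMin n b i → ¬ LRMin n b j → i < j → b j < b i)
    {q : Fin n} (hpre : ∀ m, m < q → a m = b m) (hq : ¬ LRMin n a q)
    (hlt : b q < a q) : False := by
  set r' := b.symm (a q) with hr'
  have hbr' : b r' = a q := b.apply_symm_apply (a q)
  have hne : r' ≠ q := fun h => absurd (h ▸ hbr') (ne_of_lt hlt)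
  have hnotlt : ¬ r' < q := fun h => hne (a.injective ((hpre r' h).trans hbr'))
  have hqr' : q < r' := lt_of_le_of_ne (not_lt.mp hnotlt) (Ne.symm hne)
  have hr'nm : ¬ LRMin n b r' := by
    intro hmin
    have : b r' = a r' := hs.2 r' ((hs.1 r').mpr hmin)
    exact hne (a.injective (this.symm.trans hbr'))
  have hqnm : ¬ LRMin n b q := fun hmin => hq ((hs.1 q).mpr hmin)
  exact absurd (hbr' ▸ hdb q r' hqnm hr'nm hqr') (asymm hlt)

lemma av_key (a b : Equiv.Perm (Fin n)) (hs : sameMin a b)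
    (hav : ¬ Contains a (Equiv.swap (1 : Fin 3) 2))
    {q : Fin n} (hpre : ∀ m, m < q → a m = b m) (hq : ¬ LRMin n a q)
    (hlt : b q < a q) : False := by
  set r := a.symm (b q) with hr
  have har : a r = b q := a.apply_symm_apply (b q)
  have hne : r ≠ q := by
    intro h
    rw [h] at har
    exact (ne_of_lt hlt) har.symm
  have hnotlt : ¬ r < q := fun h => hne (b.injective (((hpre r h).symm.trans har)))
  have hqr : q < r := lt_of_le_of_ne (not_lt.mp hnotlt) (Ne.symm hne)
  have hqnm : ¬ LRMin n b q := fun hmin => hq ((hs.1 q).mpr hmin)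
  obtain ⟨l, hlq, hlv⟩ := (not_lrmin_iff b q).mp hqnm
  have hal : a l = b l := hpre l hlq
  exact hav ((contains132_iff a).mpr
    ⟨l, q, r, hlq, hqr, by rw [hal, har]; exact hlv, by rw [har]; exact hlt⟩)

lemma dec_unique (a b : Equiv.Perm (Fin n)) (hs : sameMin a b)
    (hda : ∀ i j, ¬ LRMin n a i → ¬ LRMin n a j → i < j → a j < a i)
    (hdb : ∀ i j, ¬ LRMin n b i → ¬ LRMin n b j → i < j → b j < b i) :
    a = b := by
  by_contra hne
  obtain ⟨q, hq, hpre⟩ := exists_least_diff hne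
  have hqa : ¬ LRMin n a q := fun h => hq ((hs.2 q h).symm)
  rcases hq.lt_or_gt with h | h
  · exact dec_key b a (sameMin_symm hs) hda (fun m hm => (hpre m hm).symm)
      (fun hm => hqa ((hs.1 q).mpr hm)) h
  · exact dec_key a b hs hdb hpre hqa h

lemma avoid132_unique (a b : Equiv.Perm (Fin n)) (hs : sameMin a b)
    (ha : ¬ Contains a (Equiv.swap (1 : Fin 3) 2))
    (hb : ¬ Contains b (Equiv.swap (1 : Fin 3) 2)) :
    a = b := by
  by_contra hne
  obtain ⟨q, hq, hpre⟩ := exists_least_diff hne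
  have hqa : ¬ LRMin n a q := fun h => hq ((hs.2 q h).symm)
  rcases hq.lt_or_gt with h | h
  · exact av_key b a (sameMin_symm hs) hb (fun m hm => (hpre m hm).symm)
      (fun hm => hqa ((hs.1 q).mpr hm)) h
  · exact av_key a b hs ha hpre hqa h

end SimionSchmidtAux

open SimionSchmidtAux in
theorem simion_schmidt_bijection (n : ℕ) (hn : 1 ≤ n) :
    ∃ F : {π : Equiv.Perm (Fin n) // ¬ Contains π (Equiv.swap (1 : Fin 3) 2)} →
          {σ : Equiv.Perm (Fin n) // ¬ Contains σ (1 : Equiv.Perm (Fin 3))},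
      Function.Bijective F ∧
      ∀ π, -- `F π` agrees with `π` at positions of left-to-right minima
           (∀ i : Fin n, LRMin n π.1 i → (F π).1 i = π.1 i) ∧
           -- and places the remaining values on the remaining positions in decreasing order
           (∀ i j : Fin n, ¬ LRMin n π.1 i → ¬ LRMin n π.1 j → i < j →
              (F π).1 j < (F π).1 i) := by
  classical
  have hex : ∀ π : Equiv.Perm (Fin n), ∃ σ, sameMin π σ ∧
      ∀ i j, ¬ LRMin n σ i → ¬ LRMin n σ j → i < j → σ j < σ i := exists_dec
  choose g hg1 hg2 using hex
  refine ⟨fun π => ⟨g π.1, avoids123 _ (hg2 π.1)⟩, ⟨?_, ?_⟩, ?_⟩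
  · -- injective
    intro a b h
    have hgab : g a.1 = g b.1 := congrArg Subtype.val h
    have hsm : sameMin a.1 b.1 :=
      sameMin_trans (hg1 a.1) (hgab ▸ sameMin_symm (hg1 b.1))
    exact Subtype.ext (avoid132_unique a.1 b.1 hsm a.2 b.2)
  · -- surjective
    intro σ
    obtain ⟨π, hπs, hπav⟩ := exists_avoid132 σ.1
    refine ⟨⟨π, hπav⟩, Subtype.ext ?_⟩
    have hsm : sameMin (g π) σ.1 :=
      sameMin_trans (sameMin_symm (hg1 π)) (sameMin_symm hπs)
    exact dec_unique (g π) σ.1 hsm (hg2 π) (dec_of_avoids123 σ.1 σ.2)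
  · -- spec
    intro π
    refine ⟨fun i hi => (hg1 π.1).2 i hi, fun i j hi hj hij => ?_⟩
    exact hg2 π.1 i j (fun h => hi (((hg1 π.1).1 i).mpr h))
      (fun h => hj (((hg1 π.1).1 j).mpr h)) hij
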